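/- Let A = k⟨a,b,c,d,e,f,l,m⟩/⟨bc−ef, ae, da−lm, cl⟩ with generators ordered a < b < ⋯ < m and the degree-lexicographic order on monomials. Then the associated graded algebra of A under the induced filtration is the monomial algebra gr A ≅ k⟨a,b,c,d,e,f,l,m⟩/⟨ef, ae, lm, cl, abc, cda⟩. -/

import Mathlib

/-
Common framework: connected graded algebras are presented as quotients of the
free (tensor) algebra `FreeAlgebra k X` on a (finite) generating set `X` placed
in degree 1, by a set of homogeneous relations.  The (bigraded) Yoneda algebra
`E(R) = ⊕_{i,j} Ext_R^{i,j}(k,k)` of such an algebra is represented abstractly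
by an ambient `k`-algebra `E` together with a bigraded family of subspaces
`ext : ℕ → ℕ → Submodule k E`, where `ext i j` stands for `Ext_R^{i,j}(k,k)`
(`i` = cohomological degree, `j` = internal degree).
-/

noncomputable section

/-- The monomial in the free algebra `T(V)` corresponding to a word `w` in the
fixed basis `X` of `V`. -/
def FreeMonomial (k : Type*) [CommSemiring k] {X : Type*} (w : List X) : FreeAlgebra k X :=
  (w.map (FreeAlgebra.ι k)).prod

/-- The degree-`n` homogeneous component of the free algebra `T(V)`. -/
def homogComponent (k : Type*) [CommSemiring k] (X : Type*) (n : ℕ) :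
    Submodule k (FreeAlgebra k X) :=
  Submodule.span k (FreeMonomial k '' {w : List X | w.length = n})

/-- The quotient of the free algebra by the two-sided ideal generated by `S`. -/
abbrev QuotAlg (k : Type*) [CommSemiring k] (X : Type*) (S : Set (FreeAlgebra k X)) : Type _ :=
  RingQuot (fun a b : FreeAlgebra k X => a ∈ S ∧ b = 0)

/-- A bigraded family `ext i j` (standing for `Ext^{i,j}(k,k)`) generates the
ambient algebra, as a `k`-algebra, in the cohomological degrees belonging
to `S`. -/
def GeneratedInDegrees (k : Type*) [Field k] {E : Type*} [Ring E] [Algebra k E]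
    (ext : ℕ → ℕ → Submodule k E) (S : Set ℕ) : Prop :=
  Algebra.adjoin k (⋃ i ∈ S, ⋃ j, (ext i j : Set E)) = ⊤

section Groebner

variable (k : Type) [Field k] {X : Type} [LinearOrder X]

/-- The coefficient of the word `w` in an element of the free algebra. -/
def coeffWord (f : FreeAlgebra k X) (w : List X) : k :=
  (FreeAlgebra.equivMonoidAlgebraFreeMonoid (R := k) (X := X) f).coeff (FreeMonoid.ofList w)

/-- Degree-lexicographic order on words over the ordered alphabet `X`. -/
def DegLexLT (u v : List X) : Prop :=
  u.length < v.length ∨ (u.length = v.length ∧ List.Lex (· < ·) u v)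

/-- `w` is the leading word (leading monomial) of `f` for the deg-lex order. -/
def IsLeadWord (f : FreeAlgebra k X) (w : List X) : Prop :=
  coeffWord k f w ≠ 0 ∧ ∀ u : List X, coeffWord k f u ≠ 0 → u = w ∨ DegLexLT u w

/-- The two-sided ideal of the free algebra generated by `S`, as a
`k`-submodule. -/
def twoSidedSpan (S : Set (FreeAlgebra k X)) : Submodule k (FreeAlgebra k X) :=
  Submodule.span k {x | ∃ a g b : FreeAlgebra k X, g ∈ S ∧ x = a * g * b}

end Groebner

/-!
The six words `ef, ae, lm, cl, abc, cda` are the leading words of the reduced Gröbner basis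
`ef − bc, ae, lm − da, cl, abc, cda`; the last two are `a (bc − ef) + (ae) f` and
`c (da − lm) + (cl) m`. So every word containing one of them is the leading word of a two-sided
multiple of a basis element.

Conversely, let the free algebra act on the space of words by "prepend a letter, then reduce" with
respect to `ef → bc`, `lm → da`, `ae → 0`, `cl → 0`, `abc → 0`, `cda → 0`. The four defining
relations hold letter by letter, so the action kills the ideal. It fixes normal words (those
avoiding the six) and never increases a word in the deg-lex order, so applying an element `f` of
the ideal to the empty word reads off the coefficient of its leading word if that word were
normal; as `f` acts by zero, that coefficient would vanish.
-/

section Words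

variable {X : Type} [LinearOrder X]

lemma List.Lex.append_right_of_length_eq {α : Type*} {r : α → α → Prop} (q : List α) :
    ∀ {u w : List α}, u.length = w.length → List.Lex r u w → List.Lex r (u ++ q) (w ++ q)
  | [], [], _, h => nomatch h
  | [], _ :: _, h, _ => by simp at h
  | _ :: _, _ :: _, _, .rel hr => .rel hr
  | _ :: _, _ :: _, h, .cons hl => .cons (append_right_of_length_eq q (by simpa using h) hl)

lemma DegLexLT.irrefl (u : List X) : ¬ DegLexLT u u := by
  rintro (h | ⟨-, h⟩)
  · exact lt_irrefl _ h
  · exact irrefl_of (List.Lex (· < ·)) u h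

lemma DegLexLT.trans {u v w : List X} (h₁ : DegLexLT u v) (h₂ : DegLexLT v w) :
    DegLexLT u w := by
  rcases h₁ with h₁ | ⟨e₁, l₁⟩ <;> rcases h₂ with h₂ | ⟨e₂, l₂⟩
  · exact .inl (h₁.trans h₂)
  · exact .inl (e₂ ▸ h₁)
  · exact .inl (e₁ ▸ h₂)
  · exact .inr ⟨e₁.trans e₂, List.lex_trans lt_trans l₁ l₂⟩

lemma DegLexLT.append {u v : List X} (h : DegLexLT u v) (p q : List X) :
    DegLexLT (p ++ u ++ q) (p ++ v ++ q) := by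
  rcases h with h | ⟨e, l⟩
  · exact .inl (by simp only [List.length_append]; omega)
  · have e' : (p ++ u).length = (p ++ v).length := by simp [e]
    exact .inr ⟨by simp [e], (l.append_left _ p).append_right_of_length_eq q e'⟩

lemma DegLexLT.cons {u v : List X} (h : DegLexLT u v) (i : X) : DegLexLT (i :: u) (i :: v) := by
  simpa using h.append [i] []

end Words

section FreeAlgebraWords

variable {k : Type} [Field k] {X : Type}

lemma freeMonomial_cons (i : X) (w : List X) :
    FreeMonomial k (i :: w) = FreeAlgebra.ι k i * FreeMonomial k w := by
  simp [FreeMonomial]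

lemma equivMonoidAlgebraFreeMonoid_freeMonomial (w : List X) :
    FreeAlgebra.equivMonoidAlgebraFreeMonoid (FreeMonomial k w) =
      MonoidAlgebra.single (FreeMonoid.ofList w) 1 := by
  induction w with
  | nil => simp [FreeMonomial, MonoidAlgebra.one_def]
  | cons i w ih =>
    rw [freeMonomial_cons, map_mul, ih]
    simp [FreeAlgebra.equivMonoidAlgebraFreeMonoid, MonoidAlgebra.single_mul_single]

lemma coeffWord_sub (f g : FreeAlgebra k X) (w : List X) :
    coeffWord k (f - g) w = coeffWord k f w - coeffWord k g w := by
  rw [coeffWord, map_sub, MonoidAlgebra.coeff_sub, Finsupp.sub_apply, coeffWord, coeffWord]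

lemma coeffWord_freeMonomial_self (w : List X) : coeffWord k (FreeMonomial k w) w = 1 := by
  rw [coeffWord, equivMonoidAlgebraFreeMonoid_freeMonomial, MonoidAlgebra.coeff_single,
    Finsupp.single_eq_same]

lemma coeffWord_freeMonomial_of_ne {w u : List X} (h : u ≠ w) :
    coeffWord k (FreeMonomial k w) u = 0 := by
  rw [coeffWord, equivMonoidAlgebraFreeMonoid_freeMonomial, MonoidAlgebra.coeff_single]
  exact Finsupp.single_eq_of_ne' fun h' => h (FreeMonoid.ofList.injective h').symm

lemma coeffWord_freeMonomial_mul_mul (p v q : List X) (x : FreeAlgebra k X) :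
    coeffWord k (FreeMonomial k p * x * FreeMonomial k q) (p ++ v ++ q) = coeffWord k x v := by
  simp only [coeffWord, map_mul, equivMonoidAlgebraFreeMonoid_freeMonomial,
    FreeMonoid.ofList_append, MonoidAlgebra.coeff_mul_single_mul,
    MonoidAlgebra.coeff_single_mul_mul, one_mul, mul_one]

lemma exists_eq_append_of_coeffWord_freeMonomial_mul_mul_ne_zero {p q u : List X}
    {x : FreeAlgebra k X} (h : coeffWord k (FreeMonomial k p * x * FreeMonomial k q) u ≠ 0) :
    ∃ v, u = p ++ v ++ q ∧ coeffWord k x v ≠ 0 := by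
  by_contra! hx
  apply h
  by_cases hu : ∃ v, u = p ++ v ++ q
  · obtain ⟨v, rfl⟩ := hu
    rw [coeffWord_freeMonomial_mul_mul]
    exact hx v rfl
  push Not at hu
  rw [coeffWord, map_mul, map_mul, equivMonoidAlgebraFreeMonoid_freeMonomial,
    equivMonoidAlgebraFreeMonoid_freeMonomial]
  by_cases hq : ∃ d, FreeMonoid.ofList u = d * FreeMonoid.ofList q
  · obtain ⟨d, hd⟩ := hq
    rw [hd, MonoidAlgebra.coeff_mul_single_mul, mul_one]
    refine MonoidAlgebra.coeff_single_mul_of_forall_mul_ne _ _ fun e he => hu e.toList ?_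
    rw [← FreeMonoid.toList_ofList u, hd, ← he]
    simp
  · push Not at hq
    exact MonoidAlgebra.coeff_mul_single_of_forall_mul_ne _ _ fun d hd => hq d hd.symm

variable [LinearOrder X]

lemma IsLeadWord.ne_zero {f : FreeAlgebra k X} {w : List X} (h : IsLeadWord k f w) : f ≠ 0 := by
  rintro rfl
  exact h.1 (by simp [coeffWord])

lemma isLeadWord_freeMonomial (w : List X) : IsLeadWord k (FreeMonomial k w) w :=
  ⟨by simp [coeffWord_freeMonomial_self], fun u hu => .inl (by_contra fun h =>
    hu (coeffWord_freeMonomial_of_ne h))⟩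

lemma isLeadWord_freeMonomial_sub {w₁ w₂ : List X} (h : DegLexLT w₁ w₂) :
    IsLeadWord k (FreeMonomial k w₁ - FreeMonomial k w₂) w₂ := by
  have hne : w₂ ≠ w₁ := fun e => DegLexLT.irrefl _ (e ▸ h)
  refine ⟨?_, fun u hu => ?_⟩
  · simp [coeffWord_sub, coeffWord_freeMonomial_self, coeffWord_freeMonomial_of_ne hne]
  · by_contra! hu'
    have h₁ : u ≠ w₁ := by rintro rfl; exact hu'.2 h
    simp [coeffWord_sub, coeffWord_freeMonomial_of_ne h₁, coeffWord_freeMonomial_of_ne hu'.1] at hu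

lemma IsLeadWord.freeMonomial_mul_mul {g : FreeAlgebra k X} {u : List X} (h : IsLeadWord k g u)
    (p q : List X) : IsLeadWord k (FreeMonomial k p * g * FreeMonomial k q) (p ++ u ++ q) := by
  refine ⟨by rw [coeffWord_freeMonomial_mul_mul]; exact h.1, fun u' hu' => ?_⟩
  obtain ⟨v, rfl, hv⟩ := exists_eq_append_of_coeffWord_freeMonomial_mul_mul_ne_zero hu'
  rcases h.2 v hv with rfl | hlt
  · exact .inl rfl
  · exact .inr (hlt.append p q)

end FreeAlgebraWords

section TwoSidedSpan

variable {k : Type} [Field k] {X : Type} {S : Set (FreeAlgebra k X)}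

lemma subset_twoSidedSpan : S ⊆ twoSidedSpan k S := fun g hg =>
  Submodule.subset_span ⟨1, g, 1, hg, by rw [one_mul, mul_one]⟩

lemma mul_mul_mem_twoSidedSpan {x : FreeAlgebra k X} (hx : x ∈ twoSidedSpan k S)
    (a b : FreeAlgebra k X) : a * x * b ∈ twoSidedSpan k S := by
  induction hx using Submodule.span_induction with
  | mem y hy =>
    obtain ⟨c, g, d, hg, rfl⟩ := hy
    exact Submodule.subset_span ⟨a * c, g, d * b, hg, by simp only [mul_assoc]⟩
  | zero => simp
  | add y z _ _ hy hz => simpa [mul_add, add_mul] using add_mem hy hz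
  | smul c y _ hy => simpa [mul_smul_comm, smul_mul_assoc] using Submodule.smul_mem _ c hy

lemma AlgHom.map_eq_zero_of_mem_twoSidedSpan {A : Type*} [Semiring A] [Algebra k A]
    (φ : FreeAlgebra k X →ₐ[k] A) (hφ : ∀ g ∈ S, φ g = 0) {f : FreeAlgebra k X}
    (hf : f ∈ twoSidedSpan k S) : φ f = 0 := by
  induction hf using Submodule.span_induction with
  | mem y hy =>
    obtain ⟨a, g, b, hg, rfl⟩ := hy
    rw [map_mul, map_mul, hφ g hg, mul_zero, zero_mul]
  | zero => exact map_zero φ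
  | add y z _ _ hy hz => rw [map_add, hy, hz, add_zero]
  | smul c y _ hy => rw [map_smul, hy, smul_zero]

end TwoSidedSpan

lemma FreeAlgebra.basisFreeMonoid_apply {k : Type} [Field k] {X : Type} (m : FreeMonoid X) :
    FreeAlgebra.basisFreeMonoid k X m = FreeMonomial k m.toList := by
  apply FreeAlgebra.equivMonoidAlgebraFreeMonoid.injective
  rw [equivMonoidAlgebraFreeMonoid_freeMonomial]
  simp [FreeAlgebra.basisFreeMonoid]

lemma IsLeadWord.apply_eq_coeffWord {k : Type} [Field k] {X : Type} [LinearOrder X]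
    (φ : FreeAlgebra k X →ₗ[k] (List X →₀ k))
    (hφ : ∀ u v, φ (FreeMonomial k u) v ≠ 0 → v = u ∨ DegLexLT v u)
    {f : FreeAlgebra k X} {w : List X} (hf : IsLeadWord k f w)
    (hw : φ (FreeMonomial k w) w = 1) : φ f w = coeffWord k f w := by
  have hrepr : ∀ m, (FreeAlgebra.basisFreeMonoid k X).repr f m = coeffWord k f m.toList :=
    fun _ => rfl
  conv_lhs => rw [← (FreeAlgebra.basisFreeMonoid k X).linearCombination_repr f]
  rw [Finsupp.linearCombination_apply, map_finsuppSum, Finsupp.sum_apply,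
    Finsupp.sum_eq_single (FreeMonoid.ofList w)]
  · simp [hrepr, FreeAlgebra.basisFreeMonoid_apply, hw]
  · intro m hm hmw
    have hlt : DegLexLT m.toList w := by
      refine (hf.2 _ (by rwa [← hrepr])).resolve_left fun h => hmw ?_
      rw [← h, FreeMonoid.ofList_toList]
    suffices φ (FreeMonomial k m.toList) w = 0 by
      simp [FreeAlgebra.basisFreeMonoid_apply, this]
    by_contra hne
    rcases hφ _ _ hne with rfl | hgt
    · exact DegLexLT.irrefl _ hlt
    · exact DegLexLT.irrefl _ (hgt.trans hlt)
  · simp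

section WordAction

variable {k : Type} [Field k] {X : Type} (act : X → List X → (List X →₀ k))

def wordAction : FreeAlgebra k X →ₐ[k] Module.End k (List X →₀ k) :=
  FreeAlgebra.lift k fun i => Finsupp.linearCombination k (act i)

lemma wordAction_ι (i : X) :
    wordAction act (FreeAlgebra.ι k i) = Finsupp.linearCombination k (act i) :=
  FreeAlgebra.lift_ι_apply _ _

lemma wordAction_freeMonomial_cons (i : X) (w : List X) (x : List X →₀ k) :
    wordAction act (FreeMonomial k (i :: w)) x =
      Finsupp.linearCombination k (act i) (wordAction act (FreeMonomial k w) x) := by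
  rw [freeMonomial_cons, map_mul, Module.End.mul_apply, wordAction_ι]

lemma wordAction_freeMonomial_single_nil {P : List X → Prop}
    (hact : ∀ i v, P (i :: v) → act i v = Finsupp.single (i :: v) 1)
    (hP : ∀ i v, P (i :: v) → P v) {w : List X} (hw : P w) :
    wordAction act (FreeMonomial k w) (Finsupp.single [] 1) = Finsupp.single w 1 := by
  induction w with
  | nil => simp [FreeMonomial]
  | cons i w ih =>
    rw [wordAction_freeMonomial_cons, ih (hP i w hw), Finsupp.linearCombination_single,
      one_smul, hact i w hw]

lemma wordAction_freeMonomial_single_nil_apply_ne_zero [LinearOrder X]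
    (hact : ∀ i v u, act i v u ≠ 0 → u = i :: v ∨ DegLexLT u (i :: v)) {w u : List X}
    (h : wordAction act (FreeMonomial k w) (Finsupp.single [] 1) u ≠ 0) :
    u = w ∨ DegLexLT u w := by
  induction w generalizing u with
  | nil => exact .inl (by simpa [FreeMonomial, Finsupp.single_apply, eq_comm] using h)
  | cons i w ih =>
    rw [wordAction_freeMonomial_cons, Finsupp.linearCombination_apply, Finsupp.sum_apply] at h
    obtain ⟨v, hv, hterm⟩ := Finset.exists_ne_zero_of_sum_ne_zero h
    have hvu : act i v u ≠ 0 := fun h0 => hterm (by simp [h0])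
    rcases ih (Finsupp.mem_support_iff.mp hv) with rfl | hvw
    · exact hact i v u hvu
    · rcases hact i v u hvu with rfl | hu
      · exact .inr (hvw.cons i)
      · exact .inr (hu.trans (hvw.cons i))

lemma wordAction_freeMonomial_pair_single (i j : X) (v : List X) (c : k) :
    wordAction act (FreeMonomial k [i, j]) (Finsupp.single v c) =
      c • Finsupp.linearCombination k (act i) (act j v) := by
  rw [wordAction_freeMonomial_cons, wordAction_freeMonomial_cons]
  simp [FreeMonomial, Finsupp.linearCombination_single]

theorem not_isLeadWord_of_mem_twoSidedSpan [LinearOrder X] {S : Set (FreeAlgebra k X)}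
    (hS : ∀ g ∈ S, wordAction act g = 0) {P : List X → Prop}
    (hnormal : ∀ i v, P (i :: v) → act i v = Finsupp.single (i :: v) 1)
    (hP : ∀ i v, P (i :: v) → P v)
    (htri : ∀ i v u, act i v u ≠ 0 → u = i :: v ∨ DegLexLT u (i :: v))
    {f : FreeAlgebra k X} (hf : f ∈ twoSidedSpan k S) {w : List X} (hw : P w) :
    ¬ IsLeadWord k f w := by
  intro hlead
  let φ := (LinearMap.applyₗ (Finsupp.single [] 1)).comp (wordAction act).toLinearMap
  have hφf : φ f = 0 := by
    simp [φ, (wordAction act).map_eq_zero_of_mem_twoSidedSpan hS hf]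
  have hcoeff := hlead.apply_eq_coeffWord φ
    (fun _ _ => wordAction_freeMonomial_single_nil_apply_ne_zero act htri)
    (by simp [φ, wordAction_freeMonomial_single_nil act hnormal hP hw])
  exact hlead.1 (by rw [← hcoeff, hφf, Finsupp.zero_apply])

end WordAction

namespace ExampleAlgebra

variable (k : Type) [Field k]

-- The letters `a, b, c, d, e, f, l, m` are `0, …, 7 : Fin 8`.

def relations : Set (FreeAlgebra k (Fin 8)) :=
  { FreeMonomial k [1, 2] - FreeMonomial k [4, 5],
    FreeMonomial k [0, 4],
    FreeMonomial k [3, 0] - FreeMonomial k [6, 7],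
    FreeMonomial k [2, 6] }

def obstructions : List (List (Fin 8)) :=
  [[4, 5], [0, 4], [6, 7], [2, 6], [0, 1, 2], [2, 3, 0]]

def IsNormalWord (w : List (Fin 8)) : Prop := ∀ u ∈ obstructions, ¬ u <:+: w

-- Left multiplication by a letter on normal words: `a` and `c` kill the words they would turn
-- into `ae, abc`, resp. `cl, cda`, while `e · fv = b · (c · v)` and `l · mv = d · (a · v)`.
def actA (v : List (Fin 8)) : List (Fin 8) →₀ k :=
  if [4] <+: v ∨ [1, 2] <+: v then 0 else Finsupp.single (0 :: v) 1

def actC (v : List (Fin 8)) : List (Fin 8) →₀ k :=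
  if [6] <+: v ∨ [3, 0] <+: v then 0 else Finsupp.single (2 :: v) 1

def act : Fin 8 → List (Fin 8) → (List (Fin 8) →₀ k)
  | 0, v => actA k v
  | 2, v => actC k v
  | 4, 5 :: t => (actC k t).mapDomain (List.cons 1)
  | 6, 7 :: t => (actA k t).mapDomain (List.cons 3)
  | i, v => Finsupp.single (i :: v) 1

lemma actA_eq_zero_or (v : List (Fin 8)) :
    actA k v = 0 ∨ actA k v = Finsupp.single (0 :: v) 1 := by
  unfold actA; split_ifs <;> simp

lemma actC_eq_zero_or (v : List (Fin 8)) :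
    actC k v = 0 ∨ actC k v = Finsupp.single (2 :: v) 1 := by
  unfold actC; split_ifs <;> simp

lemma linearCombination_act_b_act_c (v : List (Fin 8)) :
    Finsupp.linearCombination k (act k 1) (act k 2 v) =
      Finsupp.linearCombination k (act k 4) (act k 5 v) := by
  rcases actC_eq_zero_or k v with h | h <;> simp [act, h, Finsupp.linearCombination_single]

lemma linearCombination_act_d_act_a (v : List (Fin 8)) :
    Finsupp.linearCombination k (act k 3) (act k 0 v) =
      Finsupp.linearCombination k (act k 6) (act k 7 v) := by
  rcases actA_eq_zero_or k v with h | h <;> simp [act, h, Finsupp.linearCombination_single]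

lemma linearCombination_act_a_act_e (v : List (Fin 8)) :
    Finsupp.linearCombination k (act k 0) (act k 4 v) = 0 := by
  rcases v with _ | ⟨j, t⟩
  · simp [act, actA]
  by_cases hj : j = 5
  · subst hj
    rcases actC_eq_zero_or k t with h | h <;> simp [act, h, actA]
  · simp [act, hj, actA]

lemma linearCombination_act_c_act_l (v : List (Fin 8)) :
    Finsupp.linearCombination k (act k 2) (act k 6 v) = 0 := by
  rcases v with _ | ⟨j, t⟩
  · simp [act, actC]
  by_cases hj : j = 7
  · subst hj
    rcases actA_eq_zero_or k t with h | h <;> simp [act, h, actC]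
  · simp [act, hj, actC]

lemma wordAction_act_eq_zero_of_mem_relations :
    ∀ g ∈ relations k, wordAction (act k) g = 0 := by
  simp only [relations, Set.mem_insert_iff, Set.mem_singleton_iff]
  rintro g (rfl | rfl | rfl | rfl) <;> refine Finsupp.lhom_ext fun v c => ?_ <;>
    simp [wordAction_freeMonomial_pair_single, linearCombination_act_b_act_c,
      linearCombination_act_d_act_a, linearCombination_act_a_act_e, linearCombination_act_c_act_l]

lemma IsNormalWord.of_cons {i : Fin 8} {v : List (Fin 8)} (h : IsNormalWord (i :: v)) :
    IsNormalWord v :=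
  fun u hu hinf => h u hu (hinf.trans (List.suffix_cons i v).isInfix)

lemma IsNormalWord.not_prefix {i : Fin 8} {u v : List (Fin 8)} (h : IsNormalWord (i :: v))
    (hu : i :: u ∈ obstructions) : ¬ u <+: v :=
  fun hp => h _ hu (List.cons_prefix_cons.2 ⟨rfl, hp⟩).isInfix

lemma act_of_isNormalWord {i : Fin 8} {v : List (Fin 8)} (h : IsNormalWord (i :: v)) :
    act k i v = Finsupp.single (i :: v) 1 := by
  fin_cases i
  · simp [act, actA, h.not_prefix (u := [4]) (by decide), h.not_prefix (u := [1, 2]) (by decide)]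
  · simp [act]
  · simp [act, actC, h.not_prefix (u := [6]) (by decide), h.not_prefix (u := [3, 0]) (by decide)]
  · simp [act]
  · rcases v with _ | ⟨j, t⟩
    · simp [act]
    · have hj : j ≠ 5 := by rintro rfl; exact h.not_prefix (u := [5]) (by decide) (by simp)
      simp [act, hj]
  · simp [act]
  · rcases v with _ | ⟨j, t⟩
    · simp [act]
    · have hj : j ≠ 7 := by rintro rfl; exact h.not_prefix (u := [7]) (by decide) (by simp)
      simp [act, hj]
  · simp [act]

lemma act_eq_zero_or_single (i : Fin 8) (v : List (Fin 8)) :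
    act k i v = 0 ∨ act k i v = Finsupp.single (i :: v) 1 ∨
      ∃ u, DegLexLT u (i :: v) ∧ act k i v = Finsupp.single u 1 := by
  fin_cases i
  · rcases actA_eq_zero_or k v with h | h <;> simp [act, h]
  · simp [act]
  · rcases actC_eq_zero_or k v with h | h <;> simp [act, h]
  · simp [act]
  · rcases v with _ | ⟨j, t⟩
    · simp [act]
    by_cases hj : j = 5
    · subst hj
      rcases actC_eq_zero_or k t with h | h
      · simp [act, h]
      · exact .inr (.inr ⟨1 :: 2 :: t, .inr ⟨rfl, .rel (by decide)⟩, by simp [act, h]⟩)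
    · simp [act, hj]
  · simp [act]
  · rcases v with _ | ⟨j, t⟩
    · simp [act]
    by_cases hj : j = 7
    · subst hj
      rcases actA_eq_zero_or k t with h | h
      · simp [act, h]
      · exact .inr (.inr ⟨3 :: 0 :: t, .inr ⟨rfl, .rel (by decide)⟩, by simp [act, h]⟩)
    · simp [act, hj]
  · simp [act]

lemma act_apply_ne_zero {i : Fin 8} {v u : List (Fin 8)} (h : act k i v u ≠ 0) :
    u = i :: v ∨ DegLexLT u (i :: v) := by
  rcases act_eq_zero_or_single k i v with h0 | h1 | ⟨u', hlt, h'⟩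
  · simp [h0] at h
  · rw [h1, Finsupp.single_apply_ne_zero] at h
    exact .inl h.1
  · rw [h', Finsupp.single_apply_ne_zero] at h
    exact .inr (h.1 ▸ hlt)

lemma freeMonomial_abc_mem : FreeMonomial k [0, 1, 2] ∈ twoSidedSpan k (relations k) := by
  have h : FreeMonomial k ([0, 1, 2] : List (Fin 8)) =
      FreeMonomial k [0] * (FreeMonomial k [1, 2] - FreeMonomial k [4, 5]) * 1 +
        1 * FreeMonomial k [0, 4] * FreeMonomial k [5] := by
    simp only [FreeMonomial, List.map_cons, List.map_nil, List.prod_cons, List.prod_nil]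
    noncomm_ring
  rw [h]
  exact add_mem (mul_mul_mem_twoSidedSpan (subset_twoSidedSpan (by simp [relations])) _ _)
    (mul_mul_mem_twoSidedSpan (subset_twoSidedSpan (by simp [relations])) _ _)

lemma freeMonomial_cda_mem : FreeMonomial k [2, 3, 0] ∈ twoSidedSpan k (relations k) := by
  have h : FreeMonomial k ([2, 3, 0] : List (Fin 8)) =
      FreeMonomial k [2] * (FreeMonomial k [3, 0] - FreeMonomial k [6, 7]) * 1 +
        1 * FreeMonomial k [2, 6] * FreeMonomial k [7] := by
    simp only [FreeMonomial, List.map_cons, List.map_nil, List.prod_cons, List.prod_nil]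
    noncomm_ring
  rw [h]
  exact add_mem (mul_mul_mem_twoSidedSpan (subset_twoSidedSpan (by simp [relations])) _ _)
    (mul_mul_mem_twoSidedSpan (subset_twoSidedSpan (by simp [relations])) _ _)

lemma exists_isLeadWord_of_mem_obstructions {u : List (Fin 8)} (hu : u ∈ obstructions) :
    ∃ g ∈ twoSidedSpan k (relations k), IsLeadWord k g u := by
  have hrel : relations k ⊆ twoSidedSpan k (relations k) := subset_twoSidedSpan
  simp only [obstructions, List.mem_cons, List.not_mem_nil, or_false] at hu
  rcases hu with rfl | rfl | rfl | rfl | rfl | rfl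
  · exact ⟨_, hrel (by simp [relations]),
      isLeadWord_freeMonomial_sub (w₁ := [1, 2]) (.inr ⟨rfl, .rel (by decide)⟩)⟩
  · exact ⟨_, hrel (by simp [relations]), isLeadWord_freeMonomial _⟩
  · exact ⟨_, hrel (by simp [relations]),
      isLeadWord_freeMonomial_sub (w₁ := [3, 0]) (.inr ⟨rfl, .rel (by decide)⟩)⟩
  · exact ⟨_, hrel (by simp [relations]), isLeadWord_freeMonomial _⟩
  · exact ⟨_, freeMonomial_abc_mem k, isLeadWord_freeMonomial _⟩
  · exact ⟨_, freeMonomial_cda_mem k, isLeadWord_freeMonomial _⟩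

lemma exists_isLeadWord_of_infix {u w : List (Fin 8)} (hu : u ∈ obstructions) (huw : u <:+: w) :
    ∃ f ∈ twoSidedSpan k (relations k), f ≠ 0 ∧ IsLeadWord k f w := by
  obtain ⟨p, q, rfl⟩ := huw
  obtain ⟨g, hg, hlead⟩ := exists_isLeadWord_of_mem_obstructions k hu
  exact ⟨_, mul_mul_mem_twoSidedSpan hg _ _, (hlead.freeMonomial_mul_mul p q).ne_zero,
    hlead.freeMonomial_mul_mul p q⟩

lemma not_isLeadWord_of_isNormalWord {f : FreeAlgebra k (Fin 8)}
    (hf : f ∈ twoSidedSpan k (relations k)) {w : List (Fin 8)} (hw : IsNormalWord w) :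
    ¬ IsLeadWord k f w :=
  not_isLeadWord_of_mem_twoSidedSpan (act k) (wordAction_act_eq_zero_of_mem_relations k)
    (fun _ _ h => act_of_isNormalWord k h) (fun _ _ h => h.of_cons)
    (fun _ _ _ h => act_apply_ne_zero k h) hf hw

end ExampleAlgebra

/-- Let `A = k⟨a,b,c,d,e,f,l,m⟩/⟨bc−ef, ae, da−lm, cl⟩`, generators encoded as
`a = 0, …, f = 5, l = 6, m = 7 : Fin 8` with `a < b < ⋯ < m`, and deg-lex
order on monomials.  The set of leading words of the nonzero elements of the
defining ideal is exactly the set of words containing one of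
`ef, ae, lm, cl, abc, cda` as a connected subword; equivalently, the
associated graded algebra of `A` under the induced filtration is the monomial
algebra `gr A ≅ k⟨a,…,m⟩/⟨ef, ae, lm, cl, abc, cda⟩`. -/
theorem associated_graded_is_monomial_algebra (k : Type) [Field k] :
    ∀ w : List (Fin 8),
      (∃ f ∈ twoSidedSpan k
          ({ FreeMonomial k [1, 2] - FreeMonomial k [4, 5],  -- bc - ef
             FreeMonomial k [0, 4],                          -- ae
             FreeMonomial k [3, 0] - FreeMonomial k [6, 7],  -- da - lm
             FreeMonomial k [2, 6] } :                       -- cl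
            Set (FreeAlgebra k (Fin 8))),
          f ≠ 0 ∧ IsLeadWord k f w) ↔
      (∃ u ∈ ([[4, 5], [0, 4], [6, 7], [2, 6], [0, 1, 2], [2, 3, 0]] :
          List (List (Fin 8))), u <:+: w) := by
  intro w
  constructor
  · rintro ⟨f, hf, -, hlead⟩
    by_contra! hw
    exact ExampleAlgebra.not_isLeadWord_of_isNormalWord k hf hw hlead
  · rintro ⟨u, hu, huw⟩
    exact ExampleAlgebra.exists_isLeadWord_of_infix k hu huw
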